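/- Let 0 < r < 1 and let G be analytic on the open unit disk 𝔻 with G(0) = 0 and 1 + 2 Re G(z) > 0 for all z in the closed disk {|z| ≤ r}. Then (1/2π) ∫₀^{2π} [ r e^{iθ} G′(r e^{iθ}) / (1 + 2 Re G(r e^{iθ})) ] dθ = −(1/π) ∫_{|z|<r} [ |G′(z)|² / (1 + 2 Re G(z))² ] dm(z), where dm is Lebesgue measure on ℂ ≅ ℝ². In particular, the contour integral on the left-hand side is a nonpositive real number. -/

import Mathlib

open Complex MeasureTheory Set Metric Filter Topology
open scoped Interval ComplexConjugate Real

/-!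
Pull everything back along `exp`. Writing `b = log r` and `g = (z G'(z) / (1 + 2 Re G(z))) ∘ exp`,
the disc `|z| < r` becomes the half-strip `Re w ≤ b, |Im w| ≤ π`, on whose horizontal edges `g`
takes the same values. Green's formula on the rectangles `[a, b] × [-π, π]` identifies `I` times
the integral of `g` over the right edge minus the left one with the area integral of
`I • g' 1 - g' I = 2i ∂̄g`, and the left edge contributes nothing in the limit `a → -∞` because
`g (w) → 0` as `Re w → -∞`. Since `z G'(z)` is holomorphic and `∂̄ (1 + G + conj G) = conj G'`,
`∂̄g = -|e^w|² |G'(e^w)|² / (1 + 2 Re G(e^w))²`, and `|e^w|² = e^{2 Re w}` is exactly the Jacobian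
of `exp`, which turns the half-strip integral back into the area integral over the disc.
-/

section Strip

variable {E : Type*} [NormedAddCommGroup E] [NormedSpace ℂ E] {g φ : ℂ → E} {c d : ℝ}

theorem integral_vertical_sub_eq_integral_of_periodic {a b : ℝ} (hab : a ≤ b)
    (hg : ∀ w : ℂ, w.re ∈ Icc a b →
      ∃ L : ℂ →L[ℝ] E, HasFDerivAt g L w ∧ I • L 1 - L I = φ w)
    (hφ : ContinuousOn φ ([[a, b]] ×ℂ [[c, d]]))
    (hper : ∀ x : ℝ, g (x + c * I) = g (x + d * I)) :
    I • (∫ y in c..d, g (b + y * I)) - I • ∫ y in c..d, g (a + y * I) =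
      ∫ x in a..b, ∫ y in c..d, φ (x + y * I) := by
  have hg' : ∀ w ∈ [[a, b]] ×ℂ [[c, d]], HasFDerivAt g (fderiv ℝ g w) w ∧
      I • fderiv ℝ g w 1 - fderiv ℝ g w I = φ w := fun w hw => by
    obtain ⟨L, hL, hLφ⟩ := hg w (uIcc_of_le hab ▸ hw.1)
    rw [hL.fderiv]
    exact ⟨hL, hLφ⟩
  have hrect : IsCompact ([[a, b]] ×ℂ [[c, d]]) := isCompact_uIcc.reProdIm isCompact_uIcc
  have key := integral_boundary_rect_of_hasFDerivAt_real_off_countable g (fderiv ℝ g)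
    (a + c * I) (b + d * I) ∅ countable_empty ?_ ?_ ?_
  all_goals simp only [add_re, ofReal_re, mul_re, I_re, mul_zero, ofReal_im, I_im, mul_one,
    sub_self, add_zero, add_im, mul_im, zero_add] at *
  · simp only [hper, sub_self, zero_add] at key
    rw [key]
    refine intervalIntegral.integral_congr fun x hx =>
      intervalIntegral.integral_congr fun y hy => ?_
    exact (hg' _ (by simpa [mem_reProdIm] using And.intro hx hy)).2
  · exact fun w hw => (hg' w hw).1.continuousAt.continuousWithinAt
  · exact fun w hw => (hg' w (reProdIm_subset_iff.2
      (prod_mono Ioo_subset_Icc_self Ioo_subset_Icc_self) hw.1)).1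
  · exact (hφ.integrableOn_compact hrect).congr_fun (fun w hw => (hg' w hw).2.symm)
      hrect.measurableSet

theorem integral_vertical_eq_integral_Iic_of_periodic {b : ℝ}
    (hg : ∀ w : ℂ, w.re ≤ b → ∃ L : ℂ →L[ℝ] E, HasFDerivAt g L w ∧ I • L 1 - L I = φ w)
    (hφ : ContinuousOn φ {w | w.re ≤ b})
    (hper : ∀ x : ℝ, g (x + c * I) = g (x + d * I))
    (hdecay : Tendsto (fun x : ℝ => ∫ y in c..d, g (x + y * I)) atBot (𝓝 0))
    (hint : IntegrableOn (fun x : ℝ => ∫ y in c..d, φ (x + y * I)) (Iic b)) :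
    I • ∫ y in c..d, g (b + y * I) = ∫ x in Iic b, ∫ y in c..d, φ (x + y * I) := by
  have hrect : ∀ᶠ a : ℝ in atBot,
      I • (∫ y in c..d, g (b + y * I)) - I • ∫ y in c..d, g (a + y * I) =
        ∫ x in a..b, ∫ y in c..d, φ (x + y * I) := by
    filter_upwards [eventually_le_atBot b] with a hab
    refine integral_vertical_sub_eq_integral_of_periodic hab (fun w hw => hg w hw.2)
      (hφ.mono fun w hw => ?_) hper
    simp only [mem_reProdIm, uIcc_of_le hab] at hw
    exact hw.1.2
  have hlim := (tendsto_const_nhds.sub (hdecay.const_smul I)).congr' hrect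
  rw [smul_zero, sub_zero] at hlim
  exact tendsto_nhds_unique hlim (intervalIntegral_tendsto_integral_Iic b hint tendsto_id)

theorem tendsto_integral_comp_exp_atBot {F : ℂ → E} (hF : Tendsto F (𝓝 0) (𝓝 0)) (c d : ℝ) :
    Tendsto (fun x : ℝ => ∫ y in c..d, F (exp (x + y * I))) atBot (𝓝 0) := by
  rw [Metric.tendsto_nhds]
  intro ε hε
  have hε' : 0 < ε / (|d - c| + 1) := by positivity
  obtain ⟨δ, hδ, hFδ⟩ := Metric.tendsto_nhds_nhds.1 hF _ hε'
  filter_upwards [eventually_lt_atBot (Real.log δ)] with x hx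
  have hbound : ∀ y ∈ Ι c d, ‖F (exp (x + y * I))‖ ≤ ε / (|d - c| + 1) := by
    intro y _
    have hsmall : dist (exp (x + y * I)) 0 < δ := by
      rw [dist_zero_right, norm_exp, add_re, ofReal_re, re_ofReal_mul, I_re, mul_zero, add_zero]
      exact (Real.lt_log_iff_exp_lt hδ).1 hx
    simpa only [dist_zero_right] using (hFδ hsmall).le
  rw [dist_zero_right]
  calc ‖∫ y in c..d, F (exp (x + y * I))‖ ≤ ε / (|d - c| + 1) * |d - c| :=
        intervalIntegral.norm_integral_le_of_norm_le_const hbound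
    _ < ε := by
        rw [div_mul_eq_mul_div, div_lt_iff₀ (by positivity)]
        nlinarith [abs_nonneg (d - c)]

end Strip

section LogPolar

variable {E : Type*} [NormedAddCommGroup E] [NormedSpace ℝ E]

theorem polarCoord_symm_exp (x y : ℝ) :
    Complex.polarCoord.symm (Real.exp x, y) = exp (x + y * I) := by
  rw [Complex.polarCoord_symm_apply, exp_add, exp_mul_I, ← ofReal_exp, ← ofReal_cos, ← ofReal_sin]

theorem Complex.continuous_polarCoord_symm : Continuous Complex.polarCoord.symm :=
  equivRealProdCLM.symm.continuous.comp _root_.continuous_polarCoord_symm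

theorem integral_ball_eq_setIntegral_polarCoord (h : ℂ → E) (r : ℝ) :
    ∫ z in ball 0 r, h z =
      ∫ p in Ioo 0 r ×ˢ Ioo (-π) π, p.1 • h (Complex.polarCoord.symm p) := by
  have hset : polarCoord.target ∩ Complex.polarCoord.symm ⁻¹' ball 0 r =
      Ioo 0 r ×ˢ Ioo (-π) π := by
    ext ⟨ρ, θ⟩
    simp only [polarCoord_target, mem_inter_iff, mem_prod, mem_Ioi, mem_Ioo, mem_preimage,
      mem_ball_zero_iff, Complex.norm_polarCoord_symm]
    constructor
    · rintro ⟨⟨hρ, hθ⟩, hρr⟩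
      exact ⟨⟨hρ, (abs_of_pos hρ).symm.trans_lt hρr⟩, hθ⟩
    · rintro ⟨⟨hρ, hρr⟩, hθ⟩
      exact ⟨⟨hρ, hθ⟩, (abs_of_pos hρ).trans_lt hρr⟩
  have hmeas : MeasurableSet (Complex.polarCoord.symm ⁻¹' ball (0 : ℂ) r) :=
    measurableSet_ball.preimage Complex.continuous_polarCoord_symm.measurable
  calc ∫ z in ball 0 r, h z = ∫ z, (ball 0 r).indicator h z :=
        (integral_indicator measurableSet_ball).symm
    _ = ∫ p in polarCoord.target, p.1 • (ball 0 r).indicator h (Complex.polarCoord.symm p) :=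
        (Complex.integral_comp_polarCoord_symm _).symm
    _ = ∫ p in polarCoord.target, (Complex.polarCoord.symm ⁻¹' ball 0 r).indicator
          (fun p => p.1 • h (Complex.polarCoord.symm p)) p := by
        congr 1 with p
        by_cases hp : Complex.polarCoord.symm p ∈ ball 0 r
        · rw [indicator_of_mem hp, indicator_of_mem (mem_preimage.2 hp)]
        · rw [indicator_of_notMem hp, indicator_of_notMem (mt mem_preimage.1 hp), smul_zero]
    _ = _ := by rw [setIntegral_indicator hmeas, hset]

theorem integrableOn_polarCoord_of_continuousOn {h : ℂ → E} {r : ℝ}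
    (hh : ContinuousOn h (closedBall 0 r)) :
    IntegrableOn (fun p : ℝ × ℝ => p.1 • h (Complex.polarCoord.symm p))
      (Ioo 0 r ×ˢ Ioo (-π) π) := by
  have hmaps : MapsTo Complex.polarCoord.symm (Icc 0 r ×ˢ Icc (-π) π)
      (closedBall 0 r) := by
    rintro ⟨ρ, θ⟩ ⟨hρ, -⟩
    rw [mem_closedBall_zero_iff, Complex.norm_polarCoord_symm, abs_of_nonneg hρ.1]
    exact hρ.2
  have hcont : ContinuousOn (fun p : ℝ × ℝ => p.1 • h (Complex.polarCoord.symm p))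
      (Icc 0 r ×ˢ Icc (-π) π) :=
    continuous_fst.continuousOn.smul (hh.comp Complex.continuous_polarCoord_symm.continuousOn hmaps)
  exact (hcont.integrableOn_compact (isCompact_Icc.prod isCompact_Icc)).mono_set
    (prod_mono Ioo_subset_Icc_self Ioo_subset_Icc_self)

theorem exp_smul_integral_polarCoord_exp (h : ℂ → E) (x : ℝ) :
    Real.exp x • ∫ θ in Ioo (-π) π,
        Real.exp x • h (Complex.polarCoord.symm (Real.exp x, θ)) =
      ∫ y in -π..π, Real.exp (2 * x) • h (exp (x + y * I)) := by
  rw [intervalIntegral.integral_of_le (by linarith [Real.pi_pos]), integral_Ioc_eq_integral_Ioo,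
    ← integral_smul]
  simp only [polarCoord_symm_exp, smul_smul, ← Real.exp_add, two_mul]

theorem integrableOn_Iic_of_continuousOn_closedBall_exp {h : ℂ → E} {b : ℝ}
    (hh : ContinuousOn h (closedBall 0 (Real.exp b))) :
    IntegrableOn (fun x : ℝ => ∫ y in -π..π, Real.exp (2 * x) • h (exp (x + y * I)))
      (Iic b) := by
  have hF := integrableOn_polarCoord_of_continuousOn hh
  rw [IntegrableOn, Measure.volume_eq_prod, ← Measure.prod_restrict] at hF
  have hF' := hF.integral_prod_left
  rw [← IntegrableOn, ← integrableOn_Ioc_iff_integrableOn_Ioo, ← Real.image_exp_Iic,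
    integrableOn_image_iff_integrableOn_abs_deriv_smul measurableSet_Iic
      (fun x _ => (Real.hasDerivAt_exp x).hasDerivWithinAt) Real.exp_injective.injOn] at hF'
  refine hF'.congr_fun (fun x _ => ?_) measurableSet_Iic
  dsimp only
  rw [abs_of_pos (Real.exp_pos x), exp_smul_integral_polarCoord_exp]

theorem integral_ball_exp_eq_integral_Iic {h : ℂ → E} {b : ℝ}
    (hh : ContinuousOn h (closedBall 0 (Real.exp b))) :
    ∫ z in ball 0 (Real.exp b), h z =
      ∫ x in Iic b, ∫ y in -π..π, Real.exp (2 * x) • h (exp (x + y * I)) := by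
  have hF := integrableOn_polarCoord_of_continuousOn hh
  rw [Measure.volume_eq_prod] at hF
  rw [integral_ball_eq_setIntegral_polarCoord, Measure.volume_eq_prod, setIntegral_prod _ hF,
    ← integral_Ioc_eq_integral_Ioo, ← Real.image_exp_Iic,
    integral_image_eq_integral_abs_deriv_smul measurableSet_Iic
      (fun x _ => (Real.hasDerivAt_exp x).hasDerivWithinAt) Real.exp_injective.injOn]
  refine setIntegral_congr_fun measurableSet_Iic (fun x _ => ?_)
  rw [abs_of_pos (Real.exp_pos x), exp_smul_integral_polarCoord_exp]

end LogPolar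

noncomputable def contourIntegrand (G : ℂ → ℂ) (z : ℂ) : ℂ :=
  z * deriv G z / ((1 + 2 * (G z).re : ℝ) : ℂ)

noncomputable def areaIntegrand (G : ℂ → ℂ) (z : ℂ) : ℝ :=
  ‖deriv G z‖ ^ 2 / (1 + 2 * (G z).re) ^ 2

theorem ofReal_one_add_two_mul_re (z : ℂ) : ((1 + 2 * z.re : ℝ) : ℂ) = 1 + z + conj z := by
  rw [add_assoc, add_conj]
  push_cast
  ring

theorem hasFDerivAt_contourIntegrand_comp_exp {G : ℂ → ℂ} {U : Set ℂ} (hU : IsOpen U)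
    (hG : DifferentiableOn ℂ G U) {w : ℂ} (hw : exp w ∈ U)
    (hD : 1 + 2 * (G (exp w)).re ≠ 0) :
    ∃ L : ℂ →L[ℝ] ℂ, HasFDerivAt (contourIntegrand G ∘ exp) L w ∧
      I • L 1 - L I = -2 * I * ((Real.exp (2 * w.re) * areaIntegrand G (exp w) : ℝ) : ℂ) := by
  set z := exp w
  have hGa := hG.analyticOnNhd hU
  have hGz : HasDerivAt G (deriv G z) z := (hGa z hw).differentiableAt.hasDerivAt
  have hG'z : HasDerivAt (deriv G) (deriv (deriv G) z) z :=
    (hGa.deriv z hw).differentiableAt.hasDerivAt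
  have hD' : 1 + G z + conj (G z) ≠ 0 := by
    rw [← ofReal_one_add_two_mul_re]; exact_mod_cast hD
  have hnum :=
    ((hasDerivAt_exp w).mul (hG'z.comp w (hasDerivAt_exp w))).hasFDerivAt.restrictScalars ℝ
  have hGe := (hGz.comp w (hasDerivAt_exp w)).hasFDerivAt.restrictScalars ℝ
  have hden := ((hGe.const_add 1).add (conjCLE.toContinuousLinearMap.hasFDerivAt.comp w hGe))
  have hinv := ((hasDerivAt_inv hD').hasFDerivAt.restrictScalars ℝ).comp w hden
  refine ⟨_, (hnum.mul hinv).congr_of_eventuallyEq (.of_forall fun u => ?_), ?_⟩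
  · rw [Function.comp_apply, contourIntegrand, ofReal_one_add_two_mul_re, div_eq_mul_inv]; rfl
  · simp only [add_apply, ContinuousLinearMap.coe_comp, Function.comp_apply,
      ContinuousLinearMap.coe_restrictScalars', smul_apply,
      ContinuousLinearEquiv.coe_coe, conjCLE_apply, smul_eq_mul, map_mul, conj_I, map_one,
      ContinuousLinearMap.toSpanSingleton_apply, Pi.mul_apply]
    have harea : ((Real.exp (2 * w.re) * areaIntegrand G z : ℝ) : ℂ) =
        z * conj z * (deriv G z * conj (deriv G z)) / (1 + G z + conj (G z)) ^ 2 := by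
      rw [mul_conj', mul_conj', ← ofReal_one_add_two_mul_re, norm_exp, areaIntegrand, two_mul,
        Real.exp_add]
      push_cast
      ring
    rw [harea]
    simp only [Pi.add_apply, Function.comp_apply, conjCLE_apply]
    field_simp
    ring

section ContourArea

variable {G : ℂ → ℂ} {U : Set ℂ}

theorem continuousAt_contourIntegrand (hU : IsOpen U) (hG : DifferentiableOn ℂ G U) {z : ℂ}
    (hz : z ∈ U) (hD : 1 + 2 * (G z).re ≠ 0) : ContinuousAt (contourIntegrand G) z := by
  have hGa := hG.analyticOnNhd hU
  have hre : ContinuousAt (fun z => ((1 + 2 * (G z).re : ℝ) : ℂ)) z := by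
    have := (hGa z hz).continuousAt; fun_prop
  exact (continuousAt_id.mul (hGa.deriv z hz).continuousAt).div hre (by exact_mod_cast hD)

theorem continuousAt_areaIntegrand (hU : IsOpen U) (hG : DifferentiableOn ℂ G U) {z : ℂ}
    (hz : z ∈ U) (hD : 1 + 2 * (G z).re ≠ 0) : ContinuousAt (areaIntegrand G) z := by
  have hGa := hG.analyticOnNhd hU
  have hre : ContinuousAt (fun z => (1 + 2 * (G z).re) ^ 2) z := by
    have := (hGa z hz).continuousAt; fun_prop
  exact ((hGa.deriv z hz).continuousAt.norm.pow 2).div hre (pow_ne_zero 2 hD)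

theorem areaIntegrand_nonneg (G : ℂ → ℂ) (z : ℂ) : 0 ≤ areaIntegrand G z := by
  unfold areaIntegrand; positivity

theorem integral_contourIntegrand_exp_eq {b : ℝ} (hU : IsOpen U) (hG : DifferentiableOn ℂ G U)
    (hsub : closedBall 0 (Real.exp b) ⊆ U)
    (hD : ∀ z ∈ closedBall 0 (Real.exp b), 1 + 2 * (G z).re ≠ 0) :
    ∫ y in -π..π, contourIntegrand G (exp (b + y * I)) =
      -2 * ((∫ z in ball 0 (Real.exp b), areaIntegrand G z : ℝ) : ℂ) := by
  set φ : ℂ → ℂ := fun w => -2 * I * ((Real.exp (2 * w.re) * areaIntegrand G (exp w) : ℝ) : ℂ)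
  have hmem : ∀ w : ℂ, w.re ≤ b → exp w ∈ closedBall 0 (Real.exp b) := fun w hw => by
    rw [mem_closedBall_zero_iff, norm_exp]; exact Real.exp_le_exp.2 hw
  have harea : ContinuousOn (areaIntegrand G) (closedBall 0 (Real.exp b)) := fun z hz =>
    (continuousAt_areaIntegrand hU hG (hsub hz) (hD z hz)).continuousWithinAt
  have hφc : ContinuousOn φ {w | w.re ≤ b} :=
    continuousOn_const.mul (continuous_ofReal.comp_continuousOn
      ((by fun_prop : Continuous fun w : ℂ => Real.exp (2 * w.re)).continuousOn.mul
        (harea.comp continuous_exp.continuousOn hmem)))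
  have hper : ∀ x : ℝ, (contourIntegrand G ∘ exp) (x + (-π : ℝ) * I) =
      (contourIntegrand G ∘ exp) (x + (π : ℝ) * I) := fun x => by
    simp only [Function.comp_apply, exp_add, ofReal_neg, neg_mul, exp_neg, exp_pi_mul_I]
    norm_num
  have h0 : 0 ∈ closedBall (0 : ℂ) (Real.exp b) := mem_closedBall_self (Real.exp_pos b).le
  have hdecay := tendsto_integral_comp_exp_atBot (c := -π) (d := π)
    (by simpa [contourIntegrand] using
      (continuousAt_contourIntegrand hU hG (hsub h0) (hD 0 h0)).tendsto)
  have hφint : (fun x : ℝ => ∫ y in -π..π, φ (x + y * I)) = fun x =>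
      -2 * I * ((∫ y in -π..π, Real.exp (2 * x) * areaIntegrand G (exp (x + y * I)) : ℝ) : ℂ) := by
    ext x
    simp only [φ, add_re, ofReal_re, re_ofReal_mul, I_re, mul_zero, add_zero,
      intervalIntegral.integral_const_mul, intervalIntegral.integral_ofReal]
  have hint := (integrableOn_Iic_of_continuousOn_closedBall_exp harea).ofReal.const_mul (-2 * I)
  simp only [smul_eq_mul] at hint
  have key := integral_vertical_eq_integral_Iic_of_periodic (fun w hw =>
    hasFDerivAt_contourIntegrand_comp_exp hU hG (hsub (hmem w hw)) (hD _ (hmem w hw)))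
    hφc hper hdecay (hφint ▸ hint)
  have hball := integral_ball_exp_eq_integral_Iic harea
  simp only [smul_eq_mul] at hball
  rw [hφint, integral_const_mul, integral_complex_ofReal, ← hball, smul_eq_mul] at key
  exact mul_left_cancel₀ I_ne_zero (key.trans (by ring))

end ContourArea

theorem stmt_2 (r : ℝ) (hr0 : 0 < r) (hr1 : r < 1) (G : ℂ → ℂ)
    (hG : DifferentiableOn ℂ G (Metric.ball 0 1))
    (hpos : ∀ z ∈ Metric.closedBall (0 : ℂ) r, 0 < 1 + 2 * (G z).re) :
    ∃ J : ℝ,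
      (1 / (2 * Real.pi) : ℂ) * (∫ θ in (0 : ℝ)..(2 * Real.pi),
          (r : ℂ) * Complex.exp (θ * Complex.I) *
              deriv G ((r : ℂ) * Complex.exp (θ * Complex.I)) /
            ((1 + 2 * (G ((r : ℂ) * Complex.exp (θ * Complex.I))).re : ℝ) : ℂ)) = (J : ℂ) ∧
      J = -((1 / Real.pi) * ∫ z in Metric.ball (0 : ℂ) r,
          ‖deriv G z‖ ^ 2 / (1 + 2 * (G z).re) ^ 2) ∧
      J ≤ 0 := by
  have hper : Function.Periodic (fun θ : ℝ => contourIntegrand G (r * exp (θ * I)))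
      (2 * π) := fun θ => by
    simp only [ofReal_add, ofReal_mul, ofReal_ofNat, add_mul, exp_add, exp_two_pi_mul_I, mul_one]
  have hr : Real.exp (Real.log r) = r := Real.exp_log hr0
  have hball : closedBall (0 : ℂ) (Real.exp (Real.log r)) ⊆ ball 0 1 := by
    rw [hr]; exact closedBall_subset_ball hr1
  have hcircle : ∫ θ in (0 : ℝ)..(2 * π), contourIntegrand G (r * exp (θ * I)) =
      -2 * ((∫ z in ball 0 r, areaIntegrand G z : ℝ) : ℂ) := by
    have hstrip := integral_contourIntegrand_exp_eq isOpen_ball hG hball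
      fun z hz => (hpos z (hr ▸ hz)).ne'
    rw [hr] at hstrip
    have hshift := hper.intervalIntegral_add_eq 0 (-π)
    rw [zero_add, show -π + 2 * π = π by ring] at hshift
    rw [hshift, ← hstrip]
    refine intervalIntegral.integral_congr fun y _ => ?_
    rw [exp_add, ← ofReal_exp, hr]
  refine ⟨-((1 / π) * ∫ z in ball 0 r, areaIntegrand G z),
    (congrArg (fun t => (1 / (2 * π) : ℂ) * t) hcircle).trans ?_, rfl, ?_⟩
  · push_cast
    field_simp
  · have harea : 0 ≤ ∫ z in ball 0 r, areaIntegrand G z :=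
      setIntegral_nonneg measurableSet_ball fun z _ => areaIntegrand_nonneg G z
    have hπ := Real.pi_pos
    rw [neg_nonpos]
    positivity
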